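/- Fix $M\in\mathbb N$ and for $t\ge 0$ define the operator $T_t$ on $L_2([0,2\pi])$ (functions on $[0,2\pi]$ identified with $2\pi$-periodic functions) by $T_t f(x) = (e^{4t}-1)\int_0^{2\pi} f(y)\,\frac{dy}{2\pi} + f(x+Mt)$, where addition $x+Mt$ is understood modulo $2\pi$. Then $(T_t)_{t\ge 0}$ is a strongly continuous positive semigroup, and $\|T_t\| \le e^{4t}$ for all $t\ge 0$. -/

import Mathlib

open MeasureTheory Filter Topology Complex
open scoped ComplexOrder

noncomputable section

/-- A strongly continuous one-parameter semigroup `(T t)_{t ≥ 0}` of bounded operators. -/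
def IsC0Semigroup {X : Type*} [NormedAddCommGroup X] [NormedSpace ℂ X]
    (T : ℝ → X →L[ℂ] X) : Prop :=
  T 0 = 1 ∧ (∀ s t : ℝ, 0 ≤ s → 0 ≤ t → T (s + t) = (T s).comp (T t)) ∧
    ∀ x : X, ContinuousOn (fun t => T t x) (Set.Ici 0)

/-- `(dom, A)` is the generator of the semigroup `T`:  `x ∈ dom` and `A x = y` iff
`t⁻¹ • (T t x - x) → y` as `t → 0⁺`. -/
def IsGenerator {X : Type*} [NormedAddCommGroup X] [NormedSpace ℂ X]
    (T : ℝ → X →L[ℂ] X) (dom : Set X) (A : X → X) : Prop :=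
  ∀ x y : X, (x ∈ dom ∧ A x = y) ↔
    Tendsto (fun t : ℝ => (t : ℂ)⁻¹ • (T t x - x)) (𝓝[>] (0 : ℝ)) (𝓝 y)

/-- `R` is the resolvent operator `(lam - A)⁻¹` of the (unbounded) operator `A` with
domain `dom`. -/
def IsResolvent {X : Type*} [NormedAddCommGroup X] [NormedSpace ℂ X]
    (dom : Set X) (A : X → X) (lam : ℂ) (R : X →L[ℂ] X) : Prop :=
  (∀ y : X, R y ∈ dom ∧ lam • R y - A (R y) = y) ∧
    ∀ x ∈ dom, R (lam • x - A x) = x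

/-- The resolvent set of the (unbounded) operator `A` with domain `dom`. -/
def resolventSetU {X : Type*} [NormedAddCommGroup X] [NormedSpace ℂ X]
    (dom : Set X) (A : X → X) : Set ℂ :=
  {lam | ∃ R : X →L[ℂ] X, IsResolvent dom A lam R}

/-- The spectrum of the (unbounded) operator `A` with domain `dom`. -/
def spctm {X : Type*} [NormedAddCommGroup X] [NormedSpace ℂ X]
    (dom : Set X) (A : X → X) : Set ℂ :=
  (resolventSetU dom A)ᶜ

/-- The spectral bound `s(A) = sup Re σ(A)`, as an extended real number. -/
def spectralBound {X : Type*} [NormedAddCommGroup X] [NormedSpace ℂ X]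
    (dom : Set X) (A : X → X) : EReal :=
  ⨆ lam ∈ spctm dom A, (lam.re : EReal)

/-- The growth bound `ω(A) = inf {w : ‖T t‖ ≤ M e^{w t}}`, as an extended real number. -/
def growthBound {X : Type*} [NormedAddCommGroup X] [NormedSpace ℂ X]
    (T : ℝ → X →L[ℂ] X) : EReal :=
  ⨅ w ∈ {w : ℝ | ∃ M : ℝ, ∀ t : ℝ, 0 ≤ t → ‖T t‖ ≤ M * Real.exp (w * t)}, (w : EReal)

/-- A semigroup of operators on `Lp` is positive if each `T t` maps a.e. nonnegative
functions to a.e. nonnegative functions (using the partial order of `ℂ`). -/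
def IsPositiveLpSemigroup {Ω : Type*} [MeasurableSpace Ω] {μ : Measure Ω} {p : ENNReal}
    [Fact (1 ≤ p)] (T : ℝ → Lp ℂ p μ →L[ℂ] Lp ℂ p μ) : Prop :=
  ∀ t : ℝ, 0 ≤ t → ∀ f : Lp ℂ p μ, 0 ≤ᵐ[μ] ⇑f → 0 ≤ᵐ[μ] ⇑(T t f)

instance : Fact ((0 : ℝ) < 2 * Real.pi) := ⟨by positivity⟩

namespace Stmt13Aux
open scoped ENNReal

abbrev Om := AddCircle (2 * Real.pi)
abbrev XX := Lp ℂ 2 (volume : Measure Om)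

/-- translation as a continuous map -/
def trCM (a : Om) : C(Om, Om) := ⟨fun x => x + a, by continuity⟩

/-- translation operator on L² -/
def tr (a : Om) : XX → XX :=
  Lp.compMeasurePreserving (⇑(trCM a)) (measurePreserving_add_right _ a)

lemma coeFn_tr (a : Om) (f : XX) : tr a f =ᵐ[volume] fun x => f (x + a) :=
  Lp.coeFn_compMeasurePreserving _ _

lemma norm_tr (a : Om) (f : XX) : ‖tr a f‖ = ‖f‖ :=
  Lp.norm_compMeasurePreserving _ _

/-- the affine operator `c + f (· + a)` -/
def KK (c : ℂ) (a : Om) (f : XX) : XX := Lp.constL 2 volume ℂ c + tr a f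

lemma coeFn_KK (c : ℂ) (a : Om) (f : XX) :
    KK c a f =ᵐ[volume] fun x => c + f (x + a) := by
  refine (Lp.coeFn_add _ _).trans ?_
  filter_upwards [Lp.coeFn_const (E := ℂ) 2 (volume : Measure Om) (c := c), coeFn_tr a f]
    with x h1 h2
  simp [h1, h2, Lp.constL]

lemma measure_univ_Om : (volume : Measure Om) Set.univ = ENNReal.ofReal (2 * Real.pi) :=
  AddCircle.measure_univ (2 * Real.pi)

lemma sqrt_mul_self : (2 * Real.pi) ^ ((1:ℝ)/2) * (2 * Real.pi) ^ ((1:ℝ)/2) = 2 * Real.pi := by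
  rw [← Real.rpow_add (by positivity)]
  norm_num

lemma norm_KK (c : ℂ) (a : Om) (f : XX) :
    ‖KK c a f‖ ≤ ‖c‖ * (2 * Real.pi) ^ ((1:ℝ)/2) + ‖f‖ := by
  refine (norm_add_le _ _).trans ?_
  rw [norm_tr]
  gcongr
  have h := Lp.norm_const' (E := ℂ) (μ := (volume : Measure Om)) (p := 2) (c := c)
    (by norm_num) (by norm_num)
  have : ((Lp.constL 2 (volume : Measure Om) ℂ) c : XX) = Lp.const 2 volume c := rfl
  rw [this, h, measureReal_def, measure_univ_Om, ENNReal.toReal_ofReal (by positivity)]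
  norm_num

lemma integrable_Lp (f : XX) : Integrable (⇑f) (volume : Measure Om) :=
  (Lp.memLp f).integrable one_le_two

lemma norm_integral_le (f : XX) :
    ‖∫ x, f x ∂(volume : Measure Om)‖ ≤ ‖f‖ * (2 * Real.pi) ^ ((1:ℝ)/2) := by
  have h1 : ‖∫ x, f x ∂(volume : Measure Om)‖ ≤ ∫ x, ‖f x‖ ∂(volume : Measure Om) :=
    norm_integral_le_integral_norm _
  have h2 : ∫ x, ‖f x‖ ∂(volume : Measure Om) = (eLpNorm (⇑f) 1 volume).toReal := by
    rw [integral_norm_eq_lintegral_enorm (Lp.aestronglyMeasurable f),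
      eLpNorm_one_eq_lintegral_enorm]
  have h3 : eLpNorm (⇑f) 1 volume ≤
      eLpNorm (⇑f) 2 volume * (volume : Measure Om) Set.univ ^ ((1:ℝ)/2) := by
    have := eLpNorm_le_eLpNorm_mul_rpow_measure_univ (p := 1) (q := 2)
      one_le_two (Lp.aestronglyMeasurable f)
    norm_num at this
    convert this using 2
    norm_num
  have hfin : eLpNorm (⇑f) 2 volume * (volume : Measure Om) Set.univ ^ ((1:ℝ)/2) ≠ ∞ :=
    ENNReal.mul_ne_top (Lp.eLpNorm_ne_top f)
      (ENNReal.rpow_ne_top_of_nonneg (by norm_num) (measure_ne_top _ _))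
  have h4 := ENNReal.toReal_mono hfin h3
  rw [ENNReal.toReal_mul, ← ENNReal.toReal_rpow, measure_univ_Om,
    ENNReal.toReal_ofReal (by positivity)] at h4
  calc ‖∫ x, f x ∂(volume : Measure Om)‖ ≤ (eLpNorm (⇑f) 1 volume).toReal := h1.trans_eq h2
    _ ≤ (eLpNorm (⇑f) 2 volume).toReal * (2 * Real.pi) ^ ((1:ℝ)/2) := h4
    _ = ‖f‖ * (2 * Real.pi) ^ ((1:ℝ)/2) := by rw [Lp.norm_def]

lemma ae_comp_tr {p : Om → Prop} (a : Om) (h : ∀ᵐ y ∂(volume : Measure Om), p y) :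
    ∀ᵐ x ∂(volume : Measure Om), p (x + a) := by
  exact ((measurePreserving_add_right (volume : Measure Om) a
    ).quasiMeasurePreserving.tendsto_ae).eventually h

lemma ae_eq_comp_tr {g g' : Om → ℂ} (a : Om) (h : g =ᵐ[(volume : Measure Om)] g') :
    (fun x => g (x + a)) =ᵐ[(volume : Measure Om)] fun x => g' (x + a) :=
  ae_comp_tr (p := fun y => g y = g' y) a h

lemma integral_nonneg_of_ae_nonneg (f : XX) (hf : 0 ≤ᵐ[(volume : Measure Om)] ⇑f) :
    0 ≤ ∫ x, f x ∂(volume : Measure Om) := by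
  rw [Complex.le_def]
  have hre : ∀ᵐ x ∂(volume : Measure Om), 0 ≤ (f x).re := by
    filter_upwards [hf] with x hx
    simpa using (Complex.le_def.mp hx).1
  have him : (fun x => (f x).im) =ᵐ[(volume : Measure Om)] 0 := by
    filter_upwards [hf] with x hx
    simpa using (Complex.le_def.mp hx).2.symm
  constructor
  · have := integral_re (integrable_Lp f)
    simp only [RCLike.re_to_complex] at this ⊢
    rw [Complex.zero_re, ← this]
    exact integral_nonneg_of_ae hre
  · have := integral_im (integrable_Lp f)
    simp only [RCLike.im_to_complex] at this ⊢
    rw [Complex.zero_im, ← this]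
    rw [integral_congr_ae him]
    simp

lemma integral_tr (a : Om) (f : XX) :
    ∫ x, f (x + a) ∂(volume : Measure Om) = ∫ x, f x ∂(volume : Measure Om) :=
  integral_add_right_eq_self (fun x => f x) a

lemma integrable_tr (a : Om) (f : XX) :
    Integrable (fun x => f (x + a)) (volume : Measure Om) :=
  ((Lp.memLp f).comp_measurePreserving (measurePreserving_add_right _ a)).integrable one_le_two

end Stmt13Aux

/-- Fix `M ∈ ℕ` and for `t ≥ 0` let `T t` be the operator on
`L_2([0, 2π])` (functions on `[0, 2π]` identified with `2π`-periodic functions,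
i.e. functions on the circle `ℝ / 2πℤ`) given by
`T t f (x) = (e^{4t} - 1) ∫_0^{2π} f(y) dy/2π + f(x + Mt)`.
Then `(T t)_{t ≥ 0}` is a strongly continuous positive semigroup with
`‖T t‖ ≤ e^{4t}` for all `t ≥ 0`. -/
theorem stmt_13 (M : ℕ) (hM : 0 < M)
    (T : ℝ → Lp ℂ 2 (volume : Measure (AddCircle (2 * Real.pi))) →L[ℂ]
          Lp ℂ 2 (volume : Measure (AddCircle (2 * Real.pi))))
    (hTdef : ∀ t : ℝ, 0 ≤ t →
      ∀ f : Lp ℂ 2 (volume : Measure (AddCircle (2 * Real.pi))),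
        ∀ᵐ x ∂(volume : Measure (AddCircle (2 * Real.pi))),
          T t f x = (((Real.exp (4 * t) - 1) * (2 * Real.pi)⁻¹ : ℝ) : ℂ) *
              (∫ y, f y ∂(volume : Measure (AddCircle (2 * Real.pi)))) +
            f (x + ((M * t : ℝ) : AddCircle (2 * Real.pi)))) :
    IsC0Semigroup T ∧ IsPositiveLpSemigroup T ∧
      ∀ t : ℝ, 0 ≤ t → ‖T t‖ ≤ Real.exp (4 * t) := by
  have key : ∀ t : ℝ, 0 ≤ t → ∀ f : Stmt13Aux.XX,
      T t f = Stmt13Aux.KK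
        ((((Real.exp (4 * t) - 1) * (2 * Real.pi)⁻¹ : ℝ) : ℂ) *
          ∫ y, f y ∂(volume : Measure (AddCircle (2 * Real.pi))))
        ((M * t : ℝ) : AddCircle (2 * Real.pi)) f := by
    intro t ht f
    apply Lp.ext
    filter_upwards [hTdef t ht f, Stmt13Aux.coeFn_KK
      ((((Real.exp (4 * t) - 1) * (2 * Real.pi)⁻¹ : ℝ) : ℂ) *
        ∫ y, f y ∂(volume : Measure (AddCircle (2 * Real.pi))))
      ((M * t : ℝ) : AddCircle (2 * Real.pi)) f] with x e1 e2
    exact e1.trans e2.symm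
  have hint : ∀ t : ℝ, 0 ≤ t → ∀ f : Stmt13Aux.XX,
      ∫ x, (T t f) x ∂(volume : Measure (AddCircle (2 * Real.pi)))
        = (Real.exp (4 * t) : ℂ) * ∫ x, f x ∂(volume : Measure (AddCircle (2 * Real.pi))) := by
    intro t ht f
    rw [integral_congr_ae (hTdef t ht f),
      integral_add (integrable_const _) (Stmt13Aux.integrable_tr _ f),
      integral_const, Stmt13Aux.integral_tr, measureReal_def, Stmt13Aux.measure_univ_Om,
      ENNReal.toReal_ofReal (by positivity), Complex.real_smul]
    have hπ : (2 * Real.pi : ℂ) ≠ 0 := by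
      exact_mod_cast (by positivity : (0:ℝ) < 2 * Real.pi).ne'
    push_cast
    field_simp
    ring
  have h0 : T 0 = 1 := by
    ext f
    have ha : (((M : ℝ) * (0:ℝ) : ℝ) : AddCircle (2 * Real.pi)) = 0 := by norm_num
    filter_upwards [hTdef 0 le_rfl f] with x e1
    rw [e1]
    simp [ha]
  have hsg : ∀ s t : ℝ, 0 ≤ s → 0 ≤ t → T (s + t) = (T s).comp (T t) := by
    intro s t hs ht
    ext f
    have h1 := hTdef (s + t) (by linarith) f
    have h2 := hTdef s hs (T t f)
    have h3 := Stmt13Aux.ae_comp_tr (p := fun y =>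
        (T t f) y = (((Real.exp (4 * t) - 1) * (2 * Real.pi)⁻¹ : ℝ) : ℂ) *
              (∫ z, f z ∂(volume : Measure (AddCircle (2 * Real.pi)))) +
            f (y + ((M * t : ℝ) : AddCircle (2 * Real.pi))))
      ((M * s : ℝ) : AddCircle (2 * Real.pi)) (hTdef t ht f)
    have hIT := hint t ht f
    have hMa : ((M * (s + t) : ℝ) : AddCircle (2 * Real.pi))
        = ((M * s : ℝ) : AddCircle (2 * Real.pi)) + ((M * t : ℝ) : AddCircle (2 * Real.pi)) := by
      rw [show (M : ℝ) * (s + t) = (M : ℝ) * s + (M : ℝ) * t by ring]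
      push_cast
      rfl
    have hsc : (((Real.exp (4 * (s + t)) - 1) * (2 * Real.pi)⁻¹ : ℝ) : ℂ)
        = (((Real.exp (4 * s) - 1) * (2 * Real.pi)⁻¹ : ℝ) : ℂ) * (Real.exp (4 * t) : ℂ)
          + (((Real.exp (4 * t) - 1) * (2 * Real.pi)⁻¹ : ℝ) : ℂ) := by
      have he : Real.exp (4 * (s + t)) = Real.exp (4 * s) * Real.exp (4 * t) := by
        rw [← Real.exp_add]; ring_nf
      push_cast [he]
      ring
    filter_upwards [h1, h2, h3] with x e1 e2 e3
    simp only [ContinuousLinearMap.coe_comp', Function.comp_apply]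
    rw [e1, e2, e3, hIT, hsc, hMa, ← add_assoc]
    ring
  have hcont : ∀ f : Stmt13Aux.XX, ContinuousOn (fun t => T t f) (Set.Ici (0:ℝ)) := by
    intro f
    have hc : Continuous fun t : ℝ => Stmt13Aux.KK
        ((((Real.exp (4 * t) - 1) * (2 * Real.pi)⁻¹ : ℝ) : ℂ) *
          ∫ y, f y ∂(volume : Measure (AddCircle (2 * Real.pi))))
        ((M * t : ℝ) : AddCircle (2 * Real.pi)) f := by
      apply Continuous.add
      · exact (Lp.constL 2 (volume : Measure Stmt13Aux.Om) ℂ).continuous.comp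
          ((Complex.continuous_ofReal.comp (by fun_prop)).mul continuous_const)
      · refine Continuous.compMeasurePreservingLp continuous_const ?_
          (fun z => measurePreserving_add_right _ _) (by norm_num)
        have h1 : Continuous fun a : Stmt13Aux.Om => Stmt13Aux.trCM a := by
          apply ContinuousMap.continuous_of_continuous_uncurry
          exact continuous_snd.add continuous_fst
        exact h1.comp ((AddCircle.continuous_mk' _).comp (by fun_prop))
    exact hc.continuousOn.congr fun t ht => key t ht f
  refine ⟨⟨h0, hsg, hcont⟩, ?_, ?_⟩
  · -- positivity
    intro t ht f hf
    have h1 := hTdef t ht f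
    have hf' : ∀ᵐ y ∂(volume : Measure (AddCircle (2 * Real.pi))), 0 ≤ f y := by
      filter_upwards [hf] with y hy
      exact hy
    have hI := Stmt13Aux.integral_nonneg_of_ae_nonneg f hf'
    have hc : (0:ℂ) ≤ (((Real.exp (4 * t) - 1) * (2 * Real.pi)⁻¹ : ℝ) : ℂ) := by
      rw [Complex.zero_le_real]
      have h1' : (1:ℝ) ≤ Real.exp (4 * t) := by
        rw [← Real.exp_zero]
        exact Real.exp_le_exp.mpr (by positivity)
      have : (0:ℝ) ≤ (2 * Real.pi)⁻¹ := by positivity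
      nlinarith
    have htr := Stmt13Aux.ae_comp_tr (p := fun y => 0 ≤ f y)
      ((M * t : ℝ) : AddCircle (2 * Real.pi)) hf'
    filter_upwards [h1, htr] with x e1 e2
    simp only [Pi.zero_apply]
    rw [e1]
    exact add_nonneg (mul_nonneg hc hI) e2
  · -- norm bound
    intro t ht
    refine ContinuousLinearMap.opNorm_le_bound _ (Real.exp_nonneg _) fun f => ?_
    rw [key t ht f]
    have hc : (0:ℝ) ≤ (Real.exp (4 * t) - 1) * (2 * Real.pi)⁻¹ := by
      have h1' : (1:ℝ) ≤ Real.exp (4 * t) := by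
        rw [← Real.exp_zero]
        exact Real.exp_le_exp.mpr (by positivity)
      have : (0:ℝ) ≤ (2 * Real.pi)⁻¹ := by positivity
      nlinarith
    have hπ : (2 * Real.pi : ℝ) ≠ 0 := by positivity
    calc ‖Stmt13Aux.KK _ _ f‖
        ≤ ‖(((Real.exp (4 * t) - 1) * (2 * Real.pi)⁻¹ : ℝ) : ℂ) *
            ∫ y, f y ∂(volume : Measure (AddCircle (2 * Real.pi)))‖ *
            (2 * Real.pi) ^ ((1:ℝ)/2) + ‖f‖ := Stmt13Aux.norm_KK _ _ _
      _ = ((Real.exp (4 * t) - 1) * (2 * Real.pi)⁻¹) *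
            ‖∫ y, f y ∂(volume : Measure (AddCircle (2 * Real.pi)))‖ *
            (2 * Real.pi) ^ ((1:ℝ)/2) + ‖f‖ := by
          rw [norm_mul, Complex.norm_real, Real.norm_of_nonneg hc]
      _ ≤ ((Real.exp (4 * t) - 1) * (2 * Real.pi)⁻¹) *
            (‖f‖ * (2 * Real.pi) ^ ((1:ℝ)/2)) * (2 * Real.pi) ^ ((1:ℝ)/2) + ‖f‖ := by
          gcongr
          exact Stmt13Aux.norm_integral_le f
      _ = ((Real.exp (4 * t) - 1) * (2 * Real.pi)⁻¹) *
            ((2 * Real.pi) ^ ((1:ℝ)/2) * (2 * Real.pi) ^ ((1:ℝ)/2)) * ‖f‖ + ‖f‖ := by ring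
      _ = Real.exp (4 * t) * ‖f‖ := by
          rw [Stmt13Aux.sqrt_mul_self]
          field_simp
          ring
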